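/- Let T > 0 and 0 < H < 1/2. Let σ²_{X^H}(t,t+h) = h^{2H} − f_t(h)²/(4T^{2H}), with f_t(h) := (t+h)^{2H} − t^{2H} − |t+h−T|^{2H} + |t−T|^{2H}, be the incremental variance of the fractional Brownian bridge on [0,T]. Then for every φ ∈ Ψ and every δ > 0 with 0 < φ(δ) ≤ T − δ, sup_{φ(δ)≤t≤T−δ} sup_{0<h≤δ} |σ²_{X^H}(t,t+h)/h^{2H} − 1| ≤ T^{−2H} δ^{2H}. -/

import Mathlib

open Real Set Filter

/-- The class Ψ of continuous functions `φ : (0,T] → [0,∞)` with `φ(h) → 0`,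
`L(h) = φ(h)/h → ∞` and `h·L(h)³ → 0` as `h ↓ 0`. -/
def MemPsi (T : ℝ) (φ : ℝ → ℝ) : Prop :=
  ContinuousOn φ (Ioc 0 T) ∧ (∀ h ∈ Ioc (0:ℝ) T, 0 ≤ φ h) ∧
  Tendsto φ (nhdsWithin 0 (Ioi 0)) (nhds 0) ∧
  Tendsto (fun h => φ h / h) (nhdsWithin 0 (Ioi 0)) atTop ∧
  Tendsto (fun h => h * (φ h / h) ^ 3) (nhdsWithin 0 (Ioi 0)) (nhds 0)

/-- The auxiliary function `f_t(h)` for the fractional Brownian bridge on `[0,T]`. -/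
noncomputable def bridgef (H T t h : ℝ) : ℝ :=
  (t + h) ^ (2*H) - t ^ (2*H) - |t + h - T| ^ (2*H) + |t - T| ^ (2*H)

/-- Incremental variance `σ²_{X^H}(t,t+h)` of the fractional Brownian bridge on `[0,T]`. -/
noncomputable def sigma2bridge (H T t h : ℝ) : ℝ :=
  h ^ (2*H) - (bridgef H T t h) ^ 2 / (4 * T ^ (2*H))

/-!
For `t ≥ 0` and `t + h ≤ T` both absolute values in `f_t(h)` open up, and `f_t(h)` becomes a sum
of two increments of length `h` of `x ↦ x ^ (2H)`. Since `2H ≤ 1` this function is increasing and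
subadditive, so `0 ≤ f_t(h) ≤ 2 h^{2H}`. Hence
`|σ²(t,t+h)/h^{2H} - 1| = f_t(h)² / (4 T^{2H} h^{2H}) ≤ (h/T)^{2H} ≤ (δ/T)^{2H}`.
-/

lemma rpow_add_sub_rpow_mem_Icc {x h p : ℝ} (hx : 0 ≤ x) (hh : 0 ≤ h) (hp : 0 ≤ p)
    (hp1 : p ≤ 1) : (x + h) ^ p - x ^ p ∈ Icc 0 (h ^ p) :=
  ⟨sub_nonneg.2 (rpow_le_rpow hx (by linarith) hp),
    sub_le_iff_le_add'.2 (rpow_add_le_add_rpow hx hh hp hp1)⟩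

lemma bridgef_eq_of_add_le {H T t h : ℝ} (hh : 0 ≤ h) (hth : t + h ≤ T) :
    bridgef H T t h
      = ((t + h) ^ (2*H) - t ^ (2*H)) + ((T - t - h + h) ^ (2*H) - (T - t - h) ^ (2*H)) := by
  rw [bridgef, abs_of_nonpos (by linarith : t + h - T ≤ 0),
    abs_of_nonpos (by linarith : t - T ≤ 0)]
  ring_nf

lemma bridgef_mem_Icc {H T t h : ℝ} (hH0 : 0 ≤ H) (hH1 : H ≤ 1/2) (ht : 0 ≤ t) (hh : 0 ≤ h)
    (hth : t + h ≤ T) : bridgef H T t h ∈ Icc 0 (2 * h ^ (2*H)) := by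
  have hp0 : (0:ℝ) ≤ 2*H := by linarith
  have hp1 : 2*H ≤ 1 := by linarith
  obtain ⟨hleft0, hleft⟩ := rpow_add_sub_rpow_mem_Icc ht hh hp0 hp1
  obtain ⟨hright0, hright⟩ :=
    rpow_add_sub_rpow_mem_Icc (by linarith : 0 ≤ T - t - h) hh hp0 hp1
  rw [bridgef_eq_of_add_le hh hth]
  constructor <;> linarith

lemma sigma2bridge_div_rpow_sub_one {H T t h : ℝ} (hT : 0 < T) (hh : 0 < h) :
    sigma2bridge H T t h / h ^ (2*H) - 1
      = -(bridgef H T t h ^ 2 / (4 * T ^ (2*H) * h ^ (2*H))) := by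
  have hTp : 0 < T ^ (2*H) := rpow_pos_of_pos hT _
  have hhp : 0 < h ^ (2*H) := rpow_pos_of_pos hh _
  rw [sigma2bridge]
  field_simp
  ring

lemma abs_sigma2bridge_div_rpow_sub_one_le {H T t h : ℝ} (hH0 : 0 ≤ H) (hH1 : H ≤ 1/2)
    (hT : 0 < T) (ht : 0 ≤ t) (hh : 0 < h) (hth : t + h ≤ T) :
    |sigma2bridge H T t h / h ^ (2*H) - 1| ≤ T ^ (-(2*H)) * h ^ (2*H) := by
  have hTp : 0 < T ^ (2*H) := rpow_pos_of_pos hT _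
  have hhp : 0 < h ^ (2*H) := rpow_pos_of_pos hh _
  obtain ⟨hf0, hf⟩ := bridgef_mem_Icc hH0 hH1 ht hh.le hth
  rw [sigma2bridge_div_rpow_sub_one hT hh, abs_neg, abs_of_nonneg (by positivity)]
  calc bridgef H T t h ^ 2 / (4 * T ^ (2*H) * h ^ (2*H))
      ≤ (2 * h ^ (2*H)) ^ 2 / (4 * T ^ (2*H) * h ^ (2*H)) := by gcongr
    _ = T ^ (-(2*H)) * h ^ (2*H) := by
      rw [rpow_neg hT.le]
      field_simp
      ring

theorem bridge_C2_bound_small_general (H T : ℝ) (hH : H ∈ Set.Ioo (0:ℝ) (1/2)) (hT : 0 < T)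
    (φ : ℝ → ℝ) (δ : ℝ) (hδ : 0 < δ)
    (hφδ : 0 < φ δ) :
    (⨆ t ∈ Icc (φ δ) (T - δ), ⨆ h ∈ Ioc (0:ℝ) δ,
        |sigma2bridge H T t h / h ^ (2*H) - 1|)
      ≤ T ^ (-(2*H)) * δ ^ (2*H) := by
  obtain ⟨hH0, hH1⟩ := hH
  have hbound : 0 ≤ T ^ (-(2*H)) * δ ^ (2*H) := by positivity
  refine Real.iSup_le (fun t => Real.iSup_le (fun ht => Real.iSup_le (fun h =>
    Real.iSup_le (fun hh => ?_) hbound) hbound) hbound) hbound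
  calc |sigma2bridge H T t h / h ^ (2*H) - 1| ≤ T ^ (-(2*H)) * h ^ (2*H) :=
        abs_sigma2bridge_div_rpow_sub_one_le hH0.le hH1.le hT (hφδ.le.trans ht.1) hh.1
          (by linarith [ht.2, hh.2])
    _ ≤ T ^ (-(2*H)) * δ ^ (2*H) := by
        gcongr
        exacts [hh.1.le, hh.2]

/-- Quantitative (C2)-type bound for the fractional Brownian bridge,
case `0 < H < 1/2`. -/
theorem bridge_C2_bound_small (H T : ℝ) (hH : H ∈ Set.Ioo (0:ℝ) (1/2)) (hT : 0 < T)
    (φ : ℝ → ℝ) (hφ : MemPsi T φ) (δ : ℝ) (hδ : 0 < δ)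
    (hφδ : 0 < φ δ) (hφδT : φ δ ≤ T - δ) :
    (⨆ t ∈ Icc (φ δ) (T - δ), ⨆ h ∈ Ioc (0:ℝ) δ,
        |sigma2bridge H T t h / h ^ (2*H) - 1|)
      ≤ T ^ (-(2*H)) * δ ^ (2*H) :=
  bridge_C2_bound_small_general H T hH hT φ δ hδ hφδ
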